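/- (Theorem 2) Let 0 < α < 1 and let a, b, A, B be real numbers. Define y(t) = A·E_α(a·t^α) + B·E_α(b·t^α), y₁(t) = a·A·E_α(a·t^α) + b·B·E_α(b·t^α), and y₂(t) = a²·A·E_α(a·t^α) + b²·B·E_α(b·t^α). Then: (i) for every t > 0, the function s ↦ (1/Γ(1-α)) ∫_0^s (s-ξ)^{-α}(y(ξ) − y(0)) dξ has derivative y₁(t) at t; (ii) for every t > 0, the function s ↦ (1/Γ(1-α)) ∫_0^s (s-ξ)^{-α}(y₁(ξ) − y₁(0)) dξ has derivative y₂(t) at t; and (iii) for every t ≥ 0, y₂(t) − (a+b)·y₁(t) + a·b·y(t) = 0. In other words, y = A·E_α(a t^α) + B·E_α(b t^α) is a solution of the fractional differential equation D^{2α}y − (a+b)·D^α y + a·b·y = 0, where D^{2α} denotes the twice-iterated Jumarie derivative D^α ∘ D^α. -/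

import Mathlib

open intervalIntegral Real

/-- The one-parameter Mittag-Leffler function `E_α(x) = Σ_{n=0}^∞ x^n / Γ(1+nα)`. -/
noncomputable def mittagLeffler (α x : ℝ) : ℝ := ∑' n : ℕ, x ^ n / Real.Gamma (1 + n * α)

/-- The integral appearing in the Jumarie (modified Riemann–Liouville) fractional
derivative of order `α` of `f` with start point `0`:
`s ↦ (1/Γ(1-α)) ∫_0^s (s-ξ)^(-α) (f(ξ) - f(0)) dξ`. -/
noncomputable def jumarieInt (α : ℝ) (f : ℝ → ℝ) (s : ℝ) : ℝ :=
  (1 / Real.Gamma (1 - α)) * ∫ ξ in (0:ℝ)..s, (s - ξ) ^ (-α) * (f ξ - f 0)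

/-!
Each `u ↦ E_α(c u^α)` is an eigenfunction of `D^α` with eigenvalue `c`. Write
`E_α(c ξ^α) - 1 = Σ_{n ≥ 0} c^(n+1) ξ^((n+1)α) / Γ(1+(n+1)α)` and integrate term by term against
`(s - ξ)^(-α)`: by the Beta integral
`∫₀ˢ (s-ξ)^(-α) ξ^β dξ = Γ(1-α) Γ(1+β) / Γ(2+β-α) · s^(1+β-α)` the Jumarie integral becomes
`Σ c^(n+1) s^(1+nα) / Γ(2+nα)`, whose termwise derivative is `Σ c^(n+1) s^(nα) / Γ(1+nα)
= c E_α(c s^α)`. All interchanges are justified by absolute convergence, which comes from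
`Γ(z) / Γ(z+α) → 0`, a consequence of the log-convexity of `Γ`. Linearity of the Jumarie integral
on continuous functions then gives `D^α y = y₁` and `D^α y₁ = y₂`, and (iii) is a ring identity.
-/

open MeasureTheory Filter Topology Set

-- Log-convexity of `Γ` on the segment from `z + α` to `z + α + 1`, evaluated at `z + 1`.
theorem mul_Gamma_le_Gamma_add_mul_rpow {α z : ℝ} (hα0 : 0 < α) (hα1 : α < 1) (hz : 0 < z) :
    z * Gamma z ≤ Gamma (z + α) * (z + α) ^ (1 - α) := by
  have hzα : 0 < z + α := by linarith
  have hconv := Gamma_mul_add_mul_le_rpow_Gamma_mul_rpow_Gamma hzα (by linarith : 0 < z + α + 1)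
    hα0 (sub_pos.2 hα1) (add_sub_cancel α 1)
  rw [show α * (z + α) + (1 - α) * (z + α + 1) = z + 1 by ring, Gamma_add_one hz.ne',
    Gamma_add_one hzα.ne', mul_rpow hzα.le (Gamma_pos_of_pos hzα).le] at hconv
  calc z * Gamma z ≤ Gamma (z + α) ^ α * (Gamma (z + α) ^ (1 - α) * (z + α) ^ (1 - α)) := by
        linarith
    _ = Gamma (z + α) * (z + α) ^ (1 - α) := by
        rw [← mul_assoc, ← rpow_add (Gamma_pos_of_pos hzα), add_sub_cancel, rpow_one]

theorem tendsto_Gamma_div_Gamma_add {α : ℝ} (hα0 : 0 < α) (hα1 : α < 1) :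
    Tendsto (fun z => Gamma z / Gamma (z + α)) atTop (𝓝 0) := by
  have hbound : ∀ᶠ z in atTop, Gamma z / Gamma (z + α) ≤ 2 * z ^ (-α) := by
    filter_upwards [eventually_ge_atTop α, eventually_gt_atTop 0] with z hzα hz
    have hΓ : 0 < Gamma (z + α) := Gamma_pos_of_pos (by linarith)
    have h2z : (z + α) ^ (1 - α) ≤ 2 * z ^ (1 - α) := calc
      (z + α) ^ (1 - α) ≤ (2 * z) ^ (1 - α) := by gcongr; linarith
      _ = 2 ^ (1 - α) * z ^ (1 - α) := mul_rpow zero_le_two hz.le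
      _ ≤ 2 ^ (1 : ℝ) * z ^ (1 - α) := by gcongr <;> linarith
      _ = 2 * z ^ (1 - α) := by rw [rpow_one]
    rw [div_le_iff₀ hΓ, ← mul_le_mul_iff_of_pos_left hz]
    calc z * Gamma z ≤ Gamma (z + α) * (z + α) ^ (1 - α) :=
          mul_Gamma_le_Gamma_add_mul_rpow hα0 hα1 hz
      _ ≤ Gamma (z + α) * (2 * z ^ (1 - α)) := by gcongr
      _ = z * (2 * z ^ (-α) * Gamma (z + α)) := by
          rw [sub_eq_add_neg, rpow_add hz, rpow_one]; ring
  refine tendsto_of_tendsto_of_tendsto_of_le_of_le' tendsto_const_nhds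
    (by simpa using (tendsto_rpow_neg_atTop hα0).const_mul 2) ?_ hbound
  filter_upwards [eventually_gt_atTop 0] with z hz
  exact div_nonneg (Gamma_pos_of_pos hz).le (Gamma_pos_of_pos (by linarith)).le

theorem summable_pow_div_Gamma {α d : ℝ} (hα0 : 0 < α) (hα1 : α < 1) (hd : 0 < d) (x : ℝ) :
    Summable (fun n : ℕ => x ^ n / Gamma (d + n * α)) := by
  have hz : Tendsto (fun n : ℕ => d + n * α) atTop atTop :=
    tendsto_atTop_add_const_left _ _ (tendsto_natCast_atTop_atTop.atTop_mul_const hα0)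
  have hratio := (tendsto_Gamma_div_Gamma_add hα0 hα1).comp hz
  refine summable_of_ratio_norm_eventually_le (r := 1 / 2) (by norm_num) ?_
  filter_upwards
    [hratio.eventually (ge_mem_nhds (by positivity : (0 : ℝ) < 1 / (2 * (|x| + 1))))] with n hn
  simp only [Function.comp_apply] at hn
  have hΓ : 0 < Gamma (d + n * α) := Gamma_pos_of_pos (by positivity)
  have hΓ' : 0 < Gamma (d + n * α + α) := Gamma_pos_of_pos (by positivity)
  have hnorm : ‖x ^ (n + 1) / Gamma (d + ↑(n + 1) * α)‖
      = |x| * (Gamma (d + n * α) / Gamma (d + n * α + α)) * ‖x ^ n / Gamma (d + n * α)‖ := by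
    rw [Nat.cast_succ, add_one_mul, ← add_assoc, norm_div, norm_div, norm_pow, norm_pow,
      Real.norm_of_nonneg hΓ.le, Real.norm_of_nonneg hΓ'.le, pow_succ, Real.norm_eq_abs]
    field_simp
  rw [hnorm]
  gcongr
  calc |x| * (Gamma (d + n * α) / Gamma (d + n * α + α))
      ≤ (|x| + 1) * (1 / (2 * (|x| + 1))) := by gcongr; linarith
    _ = 1 / 2 := by field_simp

theorem summable_pow_mul_rpow_div_Gamma {α d x : ℝ} (hα0 : 0 < α) (hα1 : α < 1) (hd : 0 < d)
    (c : ℝ) (hx : 0 ≤ x) : Summable (fun n : ℕ => c ^ n * (x ^ (n * α) / Gamma (d + n * α))) :=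
  (summable_pow_div_Gamma hα0 hα1 hd (c * x ^ α)).congr fun n => by
    rw [mul_comm (n : ℝ), rpow_mul_natCast hx, mul_pow, mul_div_assoc]

theorem summable_pow_succ_mul_rpow_div_Gamma {α s : ℝ} (hα0 : 0 < α) (hα1 : α < 1) (hs : 0 < s)
    (c : ℝ) : Summable (fun n : ℕ => c ^ (n + 1) * (s ^ (1 + n * α) / Gamma (2 + n * α))) :=
  ((summable_pow_mul_rpow_div_Gamma hα0 hα1 two_pos c hs.le).mul_left (c * s)).congr fun n => by
    rw [rpow_add hs, rpow_one, pow_succ]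
    ring

theorem continuous_mittagLeffler {α : ℝ} (hα0 : 0 < α) (hα1 : α < 1) :
    Continuous (mittagLeffler α) := by
  refine continuous_iff_continuousAt.2 fun x => ?_
  set R := |x| + 1 with hR
  have hon : ContinuousOn (mittagLeffler α) (Icc (-R) R) := by
    refine continuousOn_tsum (fun n => ((continuous_pow n).div_const _).continuousOn)
      (summable_pow_div_Gamma hα0 hα1 one_pos R) fun n y hy => ?_
    have hΓ : 0 < Gamma (1 + n * α) := Gamma_pos_of_pos (by positivity)
    rw [norm_div, norm_pow, Real.norm_of_nonneg hΓ.le, Real.norm_eq_abs]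
    gcongr
    exact abs_le.2 hy
  exact hon.continuousAt (Icc_mem_nhds (by linarith [neg_abs_le x]) (by linarith [le_abs_self x]))

theorem mittagLeffler_zero (α : ℝ) : mittagLeffler α 0 = 1 := by
  rw [mittagLeffler, tsum_eq_single 0 fun n hn => by simp [zero_pow hn]]
  simp

theorem mittagLeffler_sub_one {α : ℝ} (hα0 : 0 < α) (hα1 : α < 1) (x : ℝ) :
    mittagLeffler α x - 1 = ∑' n : ℕ, x ^ (n + 1) / Gamma (1 + ↑(n + 1) * α) := by
  rw [mittagLeffler, (summable_pow_div_Gamma hα0 hα1 one_pos x).tsum_eq_zero_add]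
  simp

theorem integral_rpow_mul_sub_rpow {p q a : ℝ} (hp : 0 < p) (hq : 0 < q) (ha : 0 < a) :
    ∫ x in (0 : ℝ)..a, x ^ (p - 1) * (a - x) ^ (q - 1)
      = Gamma p * Gamma q / Gamma (p + q) * a ^ (p + q - 1) := by
  apply Complex.ofReal_injective
  have hbeta := Complex.betaIntegral_scaled p q ha
  rw [Complex.betaIntegral_eq_Gamma_mul_div _ _ (by simpa using hp) (by simpa using hq),
    ← Complex.ofReal_add, Complex.Gamma_ofReal, Complex.Gamma_ofReal, Complex.Gamma_ofReal] at hbeta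
  rw [← intervalIntegral.integral_ofReal]
  push_cast
  rw [Complex.ofReal_cpow ha.le, mul_comm]
  push_cast at hbeta ⊢
  rw [← hbeta]
  refine intervalIntegral.integral_congr fun x hx => ?_
  rw [uIcc_of_le ha.le] at hx
  rw [Complex.ofReal_cpow hx.1, Complex.ofReal_cpow (sub_nonneg.2 hx.2)]
  push_cast
  rfl

theorem integral_sub_rpow_neg_mul_rpow {α β s : ℝ} (hα1 : α < 1) (hβ : -1 < β) (hs : 0 < s) :
    ∫ ξ in (0 : ℝ)..s, (s - ξ) ^ (-α) * ξ ^ β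
      = Gamma (β + 1) * Gamma (1 - α) / Gamma (β + 2 - α) * s ^ (β + 1 - α) := by
  have hbeta := integral_rpow_mul_sub_rpow (p := β + 1) (q := 1 - α) (by linarith) (by linarith) hs
  rw [show β + 1 - 1 = β by ring, show 1 - α - 1 = -α by ring,
    show β + 1 + (1 - α) = β + 2 - α by ring, show β + 2 - α - 1 = β + 1 - α by ring] at hbeta
  rw [← hbeta]
  exact intervalIntegral.integral_congr fun ξ _ => mul_comm _ _

theorem intervalIntegrable_sub_rpow_neg_mul {α s : ℝ} {g : ℝ → ℝ} (hα1 : α < 1)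
    (hg : ContinuousOn g (uIcc 0 s)) :
    IntervalIntegrable (fun ξ => (s - ξ) ^ (-α) * g ξ) volume 0 s := by
  have hsing : IntervalIntegrable (fun ξ => (s - ξ) ^ (-α)) volume 0 s := by
    simpa using ((intervalIntegrable_rpow' (a := 0) (b := s) (by linarith)).comp_sub_left s).symm
  exact hsing.mul_continuousOn hg

theorem jumarieInt_linear_comb {α : ℝ} {f g : ℝ → ℝ} (hα1 : α < 1) (hf : Continuous f)
    (hg : Continuous g) (A B : ℝ) :
    jumarieInt α (fun t => A * f t + B * g t)
      = fun s => A * jumarieInt α f s + B * jumarieInt α g s := by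
  ext s
  have hfi := intervalIntegrable_sub_rpow_neg_mul (s := s) (g := fun ξ => f ξ - f 0) hα1
    (by fun_prop)
  have hgi := intervalIntegrable_sub_rpow_neg_mul (s := s) (g := fun ξ => g ξ - g 0) hα1
    (by fun_prop)
  have hsplit : ∀ ξ, (s - ξ) ^ (-α) * (A * f ξ + B * g ξ - (A * f 0 + B * g 0))
      = A * ((s - ξ) ^ (-α) * (f ξ - f 0)) + B * ((s - ξ) ^ (-α) * (g ξ - g 0)) :=
    fun ξ => by ring
  simp only [jumarieInt, hsplit]
  rw [integral_add (hfi.const_mul A) (hgi.const_mul B), intervalIntegral.integral_const_mul,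
    intervalIntegral.integral_const_mul]
  ring

theorem integral_Ioc_mittagLeffler_term {α s : ℝ} (hα0 : 0 < α) (hα1 : α < 1) (hs : 0 < s)
    (c : ℝ) (n : ℕ) :
    ∫ ξ in Ioc 0 s, (s - ξ) ^ (-α) * ((c * ξ ^ α) ^ (n + 1) / Gamma (1 + ↑(n + 1) * α))
      = Gamma (1 - α) * (c ^ (n + 1) * (s ^ (1 + n * α) / Gamma (2 + n * α))) := by
  have hpow : ∀ ξ ∈ Ioc 0 s,
      (s - ξ) ^ (-α) * ((c * ξ ^ α) ^ (n + 1) / Gamma (1 + ↑(n + 1) * α))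
        = c ^ (n + 1) / Gamma (1 + ↑(n + 1) * α) * ((s - ξ) ^ (-α) * ξ ^ (↑(n + 1) * α)) := by
    intro ξ hξ
    rw [mul_pow, ← rpow_mul_natCast hξ.1.le, mul_comm α]
    ring
  have hΓ : 0 < Gamma (1 + ↑(n + 1) * α) := Gamma_pos_of_pos (by positivity)
  rw [setIntegral_congr_fun measurableSet_Ioc hpow, MeasureTheory.integral_const_mul,
    ← intervalIntegral.integral_of_le hs.le,
    integral_sub_rpow_neg_mul_rpow hα1 (by linarith [show 0 ≤ ↑(n + 1) * α by positivity]) hs,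
    show ↑(n + 1) * α + 2 - α = 2 + n * α by push_cast; ring,
    show ↑(n + 1) * α + 1 - α = 1 + n * α by push_cast; ring, add_comm _ (1 : ℝ)]
  field_simp

theorem jumarieInt_mittagLeffler_eq_tsum {α s : ℝ} (hα0 : 0 < α) (hα1 : α < 1) (hs : 0 < s)
    (c : ℝ) :
    jumarieInt α (fun u => mittagLeffler α (c * u ^ α)) s
      = ∑' n : ℕ, c ^ (n + 1) * (s ^ (1 + n * α) / Gamma (2 + n * α)) := by
  set F : ℝ → ℕ → ℝ → ℝ := fun k n ξ =>
    (s - ξ) ^ (-α) * ((k * ξ ^ α) ^ (n + 1) / Gamma (1 + ↑(n + 1) * α)) with hF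
  have hint : ∀ n, IntegrableOn (F c n) (Ioc 0 s) := fun n =>
    (intervalIntegrable_iff_integrableOn_Ioc_of_le hs.le).1
      (intervalIntegrable_sub_rpow_neg_mul hα1 (by fun_prop (disch := positivity)))
  have hnorm : ∀ n, ∫ ξ in Ioc 0 s, ‖F c n ξ‖ = ∫ ξ in Ioc 0 s, F |c| n ξ := fun n =>
    setIntegral_congr_fun measurableSet_Ioc fun ξ hξ => by
      have hΓ : 0 < Gamma (1 + ↑(n + 1) * α) := Gamma_pos_of_pos (by positivity)
      simp only [hF, norm_mul, norm_div, norm_pow, Real.norm_eq_abs, abs_of_pos hΓ,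
        abs_of_nonneg (rpow_nonneg (sub_nonneg.2 hξ.2) _), abs_of_nonneg (rpow_nonneg hξ.1.le _)]
  have hsum : Summable fun n => ∫ ξ in Ioc 0 s, ‖F c n ξ‖ := by
    simp_rw [hnorm, hF, integral_Ioc_mittagLeffler_term hα0 hα1 hs]
    exact (summable_pow_succ_mul_rpow_div_Gamma hα0 hα1 hs |c|).mul_left _
  calc jumarieInt α (fun u => mittagLeffler α (c * u ^ α)) s
      = 1 / Gamma (1 - α) * ∫ ξ in Ioc 0 s, ∑' n, F c n ξ := by
        rw [jumarieInt, intervalIntegral.integral_of_le hs.le]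
        simp only [hF, zero_rpow hα0.ne', mul_zero, mittagLeffler_zero,
          mittagLeffler_sub_one hα0 hα1, tsum_mul_left]
    _ = 1 / Gamma (1 - α) * ∑' n, ∫ ξ in Ioc 0 s, F c n ξ := by
        rw [integral_tsum_of_summable_integral_norm hint hsum]
    _ = _ := by
        simp only [hF, integral_Ioc_mittagLeffler_term hα0 hα1 hs, tsum_mul_left]
        field_simp [(Gamma_pos_of_pos (sub_pos.2 hα1)).ne']

theorem hasDerivAt_one_add_rpow_div_Gamma {p : ℝ} (hp : 0 ≤ p) (y : ℝ) :
    HasDerivAt (fun s => s ^ (1 + p) / Gamma (2 + p)) (y ^ p / Gamma (1 + p)) y := by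
  have hΓ : Gamma (2 + p) = (1 + p) * Gamma (1 + p) := by
    rw [show 2 + p = 1 + p + 1 by ring, Gamma_add_one (by positivity)]
  refine ((hasDerivAt_rpow_const (p := 1 + p) (Or.inr (by linarith))).div_const _).congr_deriv ?_
  rw [hΓ, add_sub_cancel_left]
  field_simp

theorem hasDerivAt_tsum_pow_succ_mul_rpow_div_Gamma {α t : ℝ} (hα0 : 0 < α) (hα1 : α < 1)
    (ht : 0 < t) (c : ℝ) :
    HasDerivAt (fun s => ∑' n : ℕ, c ^ (n + 1) * (s ^ (1 + n * α) / Gamma (2 + n * α)))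
      (c * mittagLeffler α (c * t ^ α)) t := by
  have hderiv : ∑' n : ℕ, c ^ (n + 1) * (t ^ (n * α) / Gamma (1 + n * α))
      = c * mittagLeffler α (c * t ^ α) := by
    rw [mittagLeffler, ← tsum_mul_left]
    refine tsum_congr fun n => ?_
    rw [mul_comm (n : ℝ), rpow_mul_natCast ht.le, mul_pow, pow_succ]
    ring
  have hbound : Summable fun n : ℕ => |c| ^ (n + 1) * ((t + 1) ^ (n * α) / Gamma (1 + n * α)) :=
    ((summable_pow_mul_rpow_div_Gamma (x := t + 1) hα0 hα1 one_pos |c| (by linarith)).mul_left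
      |c|).congr fun n => by rw [pow_succ]; ring
  rw [← hderiv]
  refine hasDerivAt_tsum_of_isPreconnected hbound isOpen_Ioo (convex_Ioo 0 (t + 1)).isPreconnected
    (fun n y _ => (hasDerivAt_one_add_rpow_div_Gamma (by positivity) y).const_mul _) ?_
    ⟨ht, by linarith⟩ (summable_pow_succ_mul_rpow_div_Gamma hα0 hα1 ht c) ⟨ht, by linarith⟩
  intro n y hy
  have hΓ : 0 < Gamma (1 + n * α) := Gamma_pos_of_pos (by positivity)
  rw [norm_mul, norm_div, norm_pow, Real.norm_of_nonneg (rpow_nonneg hy.1.le _),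
    Real.norm_of_nonneg hΓ.le, Real.norm_eq_abs]
  gcongr
  exacts [hy.1.le, hy.2.le]

theorem hasDerivAt_jumarieInt_mittagLeffler {α t : ℝ} (hα0 : 0 < α) (hα1 : α < 1) (ht : 0 < t)
    (c : ℝ) :
    HasDerivAt (jumarieInt α fun u => mittagLeffler α (c * u ^ α))
      (c * mittagLeffler α (c * t ^ α)) t :=
  (hasDerivAt_tsum_pow_succ_mul_rpow_div_Gamma hα0 hα1 ht c).congr_of_eventuallyEq
    (eventually_of_mem (Ioi_mem_nhds ht) fun _ hs => jumarieInt_mittagLeffler_eq_tsum hα0 hα1 hs c)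

theorem hasDerivAt_jumarieInt_linear_comb_mittagLeffler {α t : ℝ} (hα0 : 0 < α) (hα1 : α < 1)
    (ht : 0 < t) (a b A B : ℝ) :
    HasDerivAt
      (jumarieInt α fun u => A * mittagLeffler α (a * u ^ α) + B * mittagLeffler α (b * u ^ α))
      (a * A * mittagLeffler α (a * t ^ α) + b * B * mittagLeffler α (b * t ^ α)) t := by
  have hcont : ∀ c : ℝ, Continuous fun u => mittagLeffler α (c * u ^ α) := fun c =>
    (continuous_mittagLeffler hα0 hα1).comp (continuous_const.mul (continuous_rpow_const hα0.le))
  rw [jumarieInt_linear_comb hα1 (hcont a) (hcont b)]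
  exact (((hasDerivAt_jumarieInt_mittagLeffler hα0 hα1 ht a).const_mul A).add
    ((hasDerivAt_jumarieInt_mittagLeffler hα0 hα1 ht b).const_mul B)).congr_deriv (by ring)

/-- Theorem 2: `y = A·E_α(a t^α) + B·E_α(b t^α)` solves the fractional differential
equation `D^{2α}y - (a+b)·D^α y + a·b·y = 0`, where `D^α` is the Jumarie derivative
of order `α ∈ (0,1)` with start point `0` and `D^{2α} = D^α ∘ D^α`. -/
theorem sum_mittagLeffler_solves_second_order (α a b A B : ℝ) (hα0 : 0 < α) (hα1 : α < 1) :
    letI y : ℝ → ℝ := fun t => A * mittagLeffler α (a * t ^ α) + B * mittagLeffler α (b * t ^ α)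
    letI y₁ : ℝ → ℝ := fun t =>
      a * A * mittagLeffler α (a * t ^ α) + b * B * mittagLeffler α (b * t ^ α)
    letI y₂ : ℝ → ℝ := fun t =>
      a ^ 2 * A * mittagLeffler α (a * t ^ α) + b ^ 2 * B * mittagLeffler α (b * t ^ α)
    (∀ t : ℝ, 0 < t → HasDerivAt (jumarieInt α y) (y₁ t) t) ∧
    (∀ t : ℝ, 0 < t → HasDerivAt (jumarieInt α y₁) (y₂ t) t) ∧
    (∀ t : ℝ, 0 ≤ t → y₂ t - (a + b) * y₁ t + a * b * y t = 0) := by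
  refine ⟨fun t ht => hasDerivAt_jumarieInt_linear_comb_mittagLeffler hα0 hα1 ht a b A B,
    fun t ht => ?_, fun t _ => by ring⟩
  exact (hasDerivAt_jumarieInt_linear_comb_mittagLeffler hα0 hα1 ht a b (a * A) (b * B)).congr_deriv
    (by ring)
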